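/- arXiv:1901.07663 — 3 statements merged into one kernel-verified Lean document; each statement's English description precedes it below -/
import Mathlib

section
/- The ratio Θ(s+1) / (s^s · √s · e^{−s}) tends to √(2π)·(e − 1) as the integer s tends to infinity; that is, Θ(s+1) is asymptotic to √(2π)(e−1) · s^{s+1/2} e^{−s}. -/
/-- The theta splitting function: `Θ(1) = 0` and `Θ(s+1) = 1 + s·Θ(s)` for `s ≥ 1`. -/
def Theta : ℕ → ℕ
  | 0 => 0
  | 1 => 0
  | (s + 2) => 1 + (s + 1) * Theta (s + 1)

/-!
Dividing the recurrence by `s!` telescopes it to `Θ(s+1) = s! · ∑_{k=1}^{s} 1/k!`. The sum tends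
to `e - 1`, and by Stirling's formula `s! / (s^s √s e^{-s})` tends to `√(2π)`.
-/

open Filter Real Finset Nat

theorem theta_succ_eq_factorial_mul_sum (s : ℕ) :
    (Theta (s + 1) : ℝ) = s ! * ∑ k ∈ range s, ((k + 1)! : ℝ)⁻¹ := by
  induction s with
  | zero => simp [Theta]
  | succ n ih =>
    rw [Theta, Nat.cast_add, Nat.cast_mul, ih, sum_range_succ, factorial_succ n]
    push_cast
    field_simp
    ring

theorem hasSum_inv_factorial_succ : HasSum (fun k : ℕ ↦ ((k + 1)! : ℝ)⁻¹) (exp 1 - 1) := by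
  have h := NormedSpace.expSeries_div_hasSum_exp (1 : ℝ)
  rw [← exp_eq_exp_ℝ, ← hasSum_nat_add_iff' 1] at h
  simpa using h

theorem sqrt_two_mul_stirlingSeq (s : ℕ) :
    √2 * Stirling.stirlingSeq s = s ! / ((s : ℝ) ^ s * √s * exp (-s)) := by
  rw [Stirling.stirlingSeq, sqrt_mul zero_le_two, div_pow, exp_neg, ← exp_one_pow]
  rcases s.eq_zero_or_pos with rfl | hs
  · simp
  · have : (0 : ℝ) < s := by exact_mod_cast hs
    field_simp

theorem tendsto_factorial_div_stirling :
    Tendsto (fun s : ℕ ↦ (s ! : ℝ) / ((s : ℝ) ^ s * √s * exp (-s))) atTop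
      (nhds (√(2 * π))) := by
  rw [sqrt_mul zero_le_two]
  simpa only [sqrt_two_mul_stirlingSeq] using
    Stirling.tendsto_stirlingSeq_sqrt_pi.const_mul √2

open Filter Real in
theorem theta_asymptotic :
    Tendsto (fun s : ℕ =>
        (Theta (s + 1) : ℝ) / ((s : ℝ) ^ (s : ℕ) * Real.sqrt s * Real.exp (-(s : ℝ))))
      atTop (nhds (Real.sqrt (2 * Real.pi) * (Real.exp 1 - 1))) := by
  have hsum := hasSum_inv_factorial_succ.tendsto_sum_nat
  refine (tendsto_factorial_div_stirling.mul hsum).congr fun s ↦ ?_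
  rw [theta_succ_eq_factorial_mul_sum, mul_div_right_comm]
end

section
/- For every integer s ≥ 1, Θ(s+1) equals the floor of (e − 1)·s!, i.e., Θ(s+1) = ⌊(e − 1)·s!⌋. -/
/-!
Unrolling the recurrence gives `Θ(s+1) = ∑_{k=1}^{s} s!/k! = s! (∑_{k=0}^{s} 1/k! - 1)`, so
`(e - 1) s! - Θ(s+1) = s! ∑_{k>s} 1/k!`, which is nonnegative and, for `s ≥ 1`, less than
`(s+2)/(s+1)^2 < 1`.
-/

open Finset Nat Real

lemma sum_range_inv_factorial_le_exp_one (n : ℕ) : ∑ k ∈ range n, (k ! : ℝ)⁻¹ ≤ exp 1 := by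
  simpa using sum_le_exp_of_nonneg zero_le_one n

lemma factorial_mul_exp_one_sub_sum_range_lt_one {n : ℕ} (hn : 1 ≤ n) :
    n ! * (exp 1 - ∑ k ∈ range (n + 1), (k ! : ℝ)⁻¹) < 1 := by
  have htail : exp 1 - ∑ k ∈ range (n + 1), (k ! : ℝ)⁻¹ ≤ (n + 2) / ((n + 1) ! * (n + 1)) := by
    have := exp_bound' (n := n + 1) zero_le_one le_rfl n.succ_pos
    simp only [one_pow, one_div, one_mul, cast_add, cast_one, add_assoc, one_add_one_eq_two]
      at this
    linarith
  have hn' : (1 : ℝ) ≤ n := mod_cast hn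
  calc (n ! : ℝ) * (exp 1 - ∑ k ∈ range (n + 1), (k ! : ℝ)⁻¹)
      ≤ n ! * ((n + 2) / ((n + 1) ! * (n + 1))) := by gcongr
    _ = (n + 2) / ((n + 1) * (n + 1)) := by
      push_cast [factorial_succ]
      field_simp
    _ < 1 := by
      rw [div_lt_one (by positivity)]
      nlinarith

lemma theta_succ_eq_factorial_mul_sum_sub_one (s : ℕ) :
    (Theta (s + 1) : ℝ) = s ! * (∑ k ∈ range (s + 1), (k ! : ℝ)⁻¹ - 1) := by
  induction s with
  | zero => simp [Theta]
  | succ n ih =>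
    rw [Theta, sum_range_succ]
    push_cast [factorial_succ, ih]
    field_simp
    ring

theorem theta_eq_floor (s : ℕ) (hs : 1 ≤ s) :
    (Theta (s + 1) : ℤ) = ⌊(Real.exp 1 - 1) * s.factorial⌋ := by
  have hgap : (Real.exp 1 - 1) * s.factorial - Theta (s + 1) =
      s ! * (exp 1 - ∑ k ∈ range (s + 1), (k ! : ℝ)⁻¹) := by
    rw [theta_succ_eq_factorial_mul_sum_sub_one]
    ring
  have hfac : (0 : ℝ) ≤ s ! := by positivity
  have hlow := mul_nonneg hfac (sub_nonneg.2 (sum_range_inv_factorial_le_exp_one (s + 1)))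
  have hupp := factorial_mul_exp_one_sub_sum_range_lt_one hs
  rw [eq_comm, Int.floor_eq_iff]
  push_cast
  constructor <;> linarith
end

section
/- For every integer s ≥ 1, the approximation error satisfies 0 < (e − 1)·s! − Θ(s+1) < 1/s. -/
open Finset Nat

theorem theta_succ_add_factorial (n : ℕ) :
    (Theta (n + 1) : ℝ) + n ! = n ! * ∑ i ∈ range (n + 1), (1 : ℝ) / i ! := by
  induction n with
  | zero => simp [Theta]
  | succ n ih =>
    have hTheta : Theta (n + 2) = 1 + (n + 1) * Theta (n + 1) := rfl
    have hfac : ((n + 1)! : ℝ) * ∑ i ∈ range (n + 1), (1 : ℝ) / i ! =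
        (n + 1) * (n ! * ∑ i ∈ range (n + 1), (1 : ℝ) / i !) := by
      push_cast [factorial_succ]
      ring
    rw [sum_range_succ, mul_add, hfac, ← ih, mul_one_div_cancel (by positivity), hTheta]
    push_cast [factorial_succ]
    ring

theorem exp_one_sub_one_mul_factorial_sub_theta (n : ℕ) :
    (Real.exp 1 - 1) * (n ! : ℝ) - Theta (n + 1) =
      n ! * (Real.exp 1 - ∑ i ∈ range (n + 1), (1 : ℝ) / i !) := by
  linear_combination -theta_succ_add_factorial n

theorem sum_range_one_div_factorial_lt_exp_one (n : ℕ) :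
    ∑ i ∈ range n, (1 : ℝ) / i ! < Real.exp 1 := by
  calc ∑ i ∈ range n, (1 : ℝ) / i !
      < ∑ i ∈ range (n + 1), (1 : ℝ) / i ! := by
        rw [sum_range_succ]
        exact lt_add_of_pos_right _ (by positivity)
    _ ≤ Real.exp 1 := by simpa using Real.sum_le_exp_of_nonneg zero_le_one (n + 1)

theorem exp_one_sub_sum_range_one_div_factorial_le {n : ℕ} (hn : 0 < n) :
    Real.exp 1 - ∑ i ∈ range n, (1 : ℝ) / i ! ≤ (n + 1) / (n ! * n) := by
  have h := Real.exp_bound' zero_le_one le_rfl hn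
  simp only [one_pow, one_mul] at h
  linarith

theorem theta_error_bounds (s : ℕ) (hs : 1 ≤ s) :
    0 < (Real.exp 1 - 1) * s.factorial - (Theta (s + 1) : ℝ) ∧
      (Real.exp 1 - 1) * s.factorial - (Theta (s + 1) : ℝ) < 1 / s := by
  rw [exp_one_sub_one_mul_factorial_sub_theta]
  have hfac : (0 : ℝ) < s ! := by positivity
  refine ⟨mul_pos hfac (sub_pos.2 (sum_range_one_div_factorial_lt_exp_one _)), ?_⟩
  have hs' : (1 : ℝ) ≤ s := by exact_mod_cast hs
  calc (s ! : ℝ) * (Real.exp 1 - ∑ i ∈ range (s + 1), (1 : ℝ) / i !)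
      ≤ s ! * ((s + 1 + 1) / ((s + 1) ! * (s + 1))) := by
        gcongr
        exact_mod_cast exp_one_sub_sum_range_one_div_factorial_le s.succ_pos
    _ = (s + 2) / (s + 1) ^ 2 := by
        push_cast [factorial_succ]
        field_simp
        ring
    _ < 1 / s := by
        rw [div_lt_div_iff₀ (by positivity) (by positivity)]
        nlinarith
end
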